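/- Let 𝔽 = {F'_α ⊂ F''_α} be a generalized flag in V (with V, V_* countable-dimensional complex vector spaces in nondegenerate pairing). The stabilizer of 𝔽 in 𝔤𝔩(V,V_*) = V ⊗ V_* equals Σ_α F''_α ⊗ (F'_α)^⊥. -/

import Mathlib

open TensorProduct

/-- The perpendicular complement of a subspace with respect to a pairing. -/
def perp {X Y : Type*} [AddCommGroup X] [Module ℂ X] [AddCommGroup Y] [Module ℂ Y]
    (B : X →ₗ[ℂ] Y →ₗ[ℂ] ℂ) (F : Submodule ℂ X) : Submodule ℂ Y where
  carrier := {y | ∀ x ∈ F, B x y = 0}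
  add_mem' := by intro a b ha hb x hx; simp [map_add, ha x hx, hb x hx]
  zero_mem' := by intro x hx; simp
  smul_mem' := by intro c a ha x hx; simp [ha x hx]

/-- `F` and `G` form an immediate predecessor-successor pair of the chain `C`. -/
def ImmPair {V : Type*} [AddCommGroup V] [Module ℂ V]
    (C : Set (Submodule ℂ V)) (F G : Submodule ℂ V) : Prop :=
  F ∈ C ∧ G ∈ C ∧ F < G ∧ ∀ H ∈ C, ¬(F < H ∧ H < G)

/-- A generalized flag in `V`: a chain of subspaces in which every member has
an immediate predecessor or an immediate successor, and every nonzero vector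
lies in `F'' \ F'` for some immediate predecessor-successor pair `F' ⊂ F''`. -/
structure GenFlag (V : Type*) [AddCommGroup V] [Module ℂ V] where
  carrier : Set (Submodule ℂ V)
  chain : IsChain (· ≤ ·) carrier
  neighbor : ∀ F ∈ carrier,
    (∃ G, ImmPair carrier G F) ∨ (∃ G, ImmPair carrier F G)
  covers : ∀ x : V, x ≠ 0 → ∃ F G, ImmPair carrier F G ∧ x ∈ G ∧ x ∉ F

/-- The action of `𝔤𝔩(V,V_*) = V ⊗ V_*` on `V`: `(v ⊗ w) · u = ⟨u, w⟩ v`. -/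
noncomputable def toEnd {V W : Type*} [AddCommGroup V] [Module ℂ V]
    [AddCommGroup W] [Module ℂ W] (B : V →ₗ[ℂ] W →ₗ[ℂ] ℂ) :
    V ⊗[ℂ] W →ₗ[ℂ] Module.End ℂ V :=
  TensorProduct.lift <| LinearMap.mk₂ ℂ (fun v w => (B.flip w).smulRight v)
    (fun v v' w => by ext u; simp)
    (fun c v w => by ext u; exact smul_comm _ _ _)
    (fun v w w' => by ext u; simp [add_smul])
    (fun c v w => by ext u; simp [smul_smul, mul_comm])

/-- The stabilizer in `𝔤𝔩(V,V_*) = V ⊗ V_*` of a family `C` of subspaces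
of `V`. -/
def glStab {V W : Type*} [AddCommGroup V] [Module ℂ V]
    [AddCommGroup W] [Module ℂ W] (B : V →ₗ[ℂ] W →ₗ[ℂ] ℂ)
    (C : Set (Submodule ℂ V)) : Submodule ℂ (V ⊗[ℂ] W) where
  carrier := {t | ∀ F ∈ C, ∀ x ∈ F, toEnd B t x ∈ F}
  add_mem' := by
    intro a b ha hb F hF x hx
    have : toEnd B (a + b) x = toEnd B a x + toEnd B b x := by simp
    rw [this]; exact F.add_mem (ha F hF x hx) (hb F hF x hx)
  zero_mem' := by intro F hF x hx; simp
  smul_mem' := by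
    intro c a ha F hF x hx
    have : toEnd B (c • a) x = c • toEnd B a x := by simp
    rw [this]; exact F.smul_mem c (ha F hF x hx)

/-- The subspace `Σ_α F''_α ⊗ (F'_α)^⊥` of `V ⊗ V_*`, the sum running over
the immediate predecessor-successor pairs of `C`. -/
noncomputable def flagSum {V W : Type*} [AddCommGroup V] [Module ℂ V]
    [AddCommGroup W] [Module ℂ W] (B : V →ₗ[ℂ] W →ₗ[ℂ] ℂ)
    (C : Set (Submodule ℂ V)) : Submodule ℂ (V ⊗[ℂ] W) :=
  ⨆ p : {q : Submodule ℂ V × Submodule ℂ V // ImmPair C q.1 q.2},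
    LinearMap.range
      (TensorProduct.map (p.1.2).subtype (perp B p.1.1).subtype)

/-!
Write a stabilizing tensor `t` as an element of `S ⊗ V_*` for a finite-dimensional `S ⊆ V` and
induct on `dim S`. Some immediate pair `F' ⊂ F''` has `F' ∩ S = 0` and `F'' ∩ S ≠ 0`. Since `t`
maps `F'` into `F' ∩ S = 0`, it lies in `V ⊗ F'^⊥`; a projection `π` of `V` onto `F''` then
splits `t` as `(π ⊗ 1) t ∈ F'' ⊗ F'^⊥` plus a stabilizing remainder in `(1 - π)(S) ⊗ V_*`,
and `dim (1 - π)(S) < dim S` because `1 - π` kills `F'' ∩ S ≠ 0`.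
-/

open TensorProduct Module

theorem Submodule.finrank_map_lt {K M N : Type*} [Field K] [AddCommGroup M] [Module K M]
    [AddCommGroup N] [Module K N] {S : Submodule K M} [FiniteDimensional K S] (f : M →ₗ[K] N)
    {u : M} (huS : u ∈ S) (hu : u ≠ 0) (hfu : f u = 0) :
    finrank K (S.map f) < finrank K S := by
  have hker : 0 < finrank K (LinearMap.ker (f.domRestrict S)) :=
    finrank_pos_iff_exists_ne_zero.2 ⟨⟨⟨u, huS⟩, hfu⟩, fun h => hu congr($h.1.1)⟩
  have := LinearMap.finrank_range_add_finrank_ker (f.domRestrict S)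
  rw [LinearMap.range_domRestrict] at this
  omega

theorem LinearMap.rTensor_mem_range_rTensor_map {R M N P : Type*} [CommSemiring R]
    [AddCommMonoid M] [Module R M] [AddCommMonoid N] [Module R N] [AddCommMonoid P] [Module R P]
    {S : Submodule R M} (f : M →ₗ[R] N) {t : M ⊗[R] P}
    (ht : t ∈ LinearMap.range (S.subtype.rTensor P)) :
    f.rTensor P t ∈ LinearMap.range ((S.map f).subtype.rTensor P) := by
  obtain ⟨s, rfl⟩ := ht
  refine ⟨(f.submoduleMap S).rTensor P s, ?_⟩
  rw [← LinearMap.comp_apply, ← LinearMap.rTensor_comp, ← LinearMap.comp_apply,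
    ← LinearMap.rTensor_comp]
  rfl

section

variable {V W : Type*} [AddCommGroup V] [Module ℂ V] [AddCommGroup W] [Module ℂ W]
  (B : V →ₗ[ℂ] W →ₗ[ℂ] ℂ) {C : Set (Submodule ℂ V)}

theorem ImmPair.le_or_le (hC : IsChain (· ≤ ·) C)
    {F' F'' F : Submodule ℂ V} (h : ImmPair C F' F'') (hF : F ∈ C) : F'' ≤ F ∨ F ≤ F' := by
  obtain ⟨hF', hF'', -, hnot⟩ := h
  rcases hC.total hF'' hF with hle | hle
  · exact Or.inl hle
  rcases hC.total hF hF' with hle' | hle'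
  · exact Or.inr hle'
  rcases hle.lt_or_eq with hlt | rfl
  · rcases hle'.lt_or_eq with hlt' | rfl
    · exact absurd ⟨hlt', hlt⟩ (hnot F hF)
    · exact Or.inr le_rfl
  · exact Or.inl le_rfl

theorem toEnd_tmul (v : V) (w : W) (x : V) : toEnd B (v ⊗ₜ w) x = B x w • v := rfl

theorem apply_toEnd (φ : V →ₗ[ℂ] ℂ) (t : V ⊗[ℂ] W) (x : V) :
    φ (toEnd B t x) = B x (TensorProduct.lid ℂ W (φ.rTensor W t)) := by
  induction t using TensorProduct.induction_on with
  | zero => simp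
  | tmul v w => simp [toEnd_tmul, mul_comm]
  | add t₁ t₂ h₁ h₂ => simp [h₁, h₂]

theorem toEnd_apply_mem_of_mem_range_rTensor {S : Submodule ℂ V} {t : V ⊗[ℂ] W}
    (ht : t ∈ LinearMap.range (S.subtype.rTensor W)) (x : V) : toEnd B t x ∈ S := by
  obtain ⟨s, rfl⟩ := ht
  induction s using TensorProduct.induction_on with
  | zero => simp
  | tmul v w => exact S.smul_mem _ v.2
  | add s₁ s₂ h₁ h₂ => simpa using S.add_mem h₁ h₂

theorem mem_range_lTensor_perp {F : Submodule ℂ V} {t : V ⊗[ℂ] W}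
    (ht : ∀ x ∈ F, toEnd B t x = 0) : t ∈ LinearMap.range ((perp B F).subtype.lTensor V) := by
  classical
  let b := Basis.ofVectorSpace ℂ V
  set c := equivFinsuppOfBasisLeft b t
  have hc : ∀ i, c i ∈ perp B F := fun i x hx => by
    rw [equivFinsuppOfBasisLeft_apply, ← apply_toEnd, ht x hx, map_zero]
  rw [← (equivFinsuppOfBasisLeft b).symm_apply_apply t, equivFinsuppOfBasisLeft_symm_apply]
  exact Submodule.finsuppSum_mem _ _ _ _ fun i _ => ⟨b i ⊗ₜ ⟨c i, hc i⟩, rfl⟩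

theorem range_map_le_flagSum {F' F'' : Submodule ℂ V} (h : ImmPair C F' F'') :
    LinearMap.range (map F''.subtype (perp B F').subtype) ≤ flagSum B C :=
  le_iSup_of_le (ι := {q : Submodule ℂ V × Submodule ℂ V // ImmPair C q.1 q.2})
    ⟨(F', F''), h⟩ le_rfl

theorem flagSum_le_glStab (hC : IsChain (· ≤ ·) C) : flagSum B C ≤ glStab B C := by
  refine iSup_le fun ⟨⟨F', F''⟩, h⟩ => ?_
  rintro _ ⟨s, rfl⟩
  induction s using TensorProduct.induction_on with
  | zero => simp
  | tmul v w =>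
    intro F hF x hx
    rcases h.le_or_le hC hF with hle | hle
    · exact F.smul_mem _ (hle v.2)
    · rw [map_tmul, toEnd_tmul, Submodule.subtype_apply, w.2 x (hle hx), zero_smul]
      exact F.zero_mem
  | add s₁ s₂ h₁ h₂ => simpa using (glStab B C).add_mem h₁ h₂

/- Take the pair with `F'' ⊓ S` of least dimension among those separating a vector of `S`: a
nonzero vector of `F' ⊓ S` would be separated by a pair lying below `F'`. -/
theorem exists_immPair_inf_eq_bot (hC : IsChain (· ≤ ·) C)
    (hcov : ∀ x : V, x ≠ 0 → ∃ F G, ImmPair C F G ∧ x ∈ G ∧ x ∉ F)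
    (S : Submodule ℂ V) [FiniteDimensional ℂ S] (hS : S ≠ ⊥) :
    ∃ F' F'', ImmPair C F' F'' ∧ F' ⊓ S = ⊥ ∧ ∃ u ∈ S, u ∈ F'' ∧ u ∉ F' := by
  let P : Set (Submodule ℂ V × Submodule ℂ V) :=
    {p | ImmPair C p.1 p.2 ∧ ∃ u ∈ S, u ∈ p.2 ∧ u ∉ p.1}
  have hP : P.Nonempty := by
    obtain ⟨u, huS, hu⟩ := Submodule.exists_mem_ne_zero_of_ne_bot hS
    obtain ⟨F', F'', h, hu''⟩ := hcov u hu
    exact ⟨(F', F''), h, u, huS, hu''⟩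
  obtain ⟨⟨F', F''⟩, ⟨h, u, huS, hu'', hu'⟩, hmin⟩ :=
    (measure fun p : Submodule ℂ V × Submodule ℂ V => finrank ℂ ↥(p.2 ⊓ S)).wf.has_min P hP
  refine ⟨F', F'', h, (Submodule.eq_bot_iff _).2 fun x hx => by_contra fun hx0 => ?_,
    u, huS, hu'', hu'⟩
  obtain ⟨G', G'', hG, hxG''⟩ := hcov x hx0
  have hG''F' : G'' ≤ F' :=
    (hG.le_or_le hC h.1).resolve_right fun hle => hxG''.2 (hle hx.1)
  have hlt : G'' ⊓ S < F'' ⊓ S :=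
    lt_of_le_of_lt (inf_le_inf_right S hG''F') <|
      SetLike.lt_iff_le_and_exists.2
        ⟨inf_le_inf_right S h.2.2.1.le, u, Submodule.mem_inf.2 ⟨hu'', huS⟩, fun hu => hu' hu.1⟩
  exact hmin (G', G'') ⟨hG, x, hx.2, hxG''⟩ (Submodule.finrank_lt_finrank_of_lt hlt)

theorem glStab_inf_range_rTensor_le_flagSum (hC : IsChain (· ≤ ·) C)
    (hcov : ∀ x : V, x ≠ 0 → ∃ F G, ImmPair C F G ∧ x ∈ G ∧ x ∉ F)
    (S : Submodule ℂ V) [FiniteDimensional ℂ S] :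
    glStab B C ⊓ LinearMap.range (S.subtype.rTensor W) ≤ flagSum B C := by
  induction hn : finrank ℂ S using Nat.strong_induction_on generalizing S with
  | _ n ih =>
  rintro t ⟨ht, htS⟩
  by_cases hS : S = ⊥
  · subst hS
    obtain ⟨s, rfl⟩ := htS
    rw [show (⊥ : Submodule ℂ V).subtype = 0 from
      LinearMap.ext fun x => (Submodule.mem_bot ℂ).1 x.2, LinearMap.rTensor_zero]
    exact (flagSum B C).zero_mem
  obtain ⟨F', F'', h, hbot, u, huS, hu'', hu'⟩ := exists_immPair_inf_eq_bot hC hcov S hS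
  obtain ⟨K, hK⟩ := F''.exists_isCompl
  set π := F''.projection K hK
  have hkill : ∀ x ∈ F', toEnd B t x = 0 := fun x hx =>
    (Submodule.mem_bot ℂ).1 <| hbot ▸
      Submodule.mem_inf.2 ⟨ht F' h.1 x hx, toEnd_apply_mem_of_mem_range_rTensor B htS x⟩
  have ht₁ : π.rTensor W t ∈ flagSum B C := by
    obtain ⟨s, rfl⟩ := mem_range_lTensor_perp B hkill
    refine range_map_le_flagSum B h ⟨map (F''.projectionOnto K hK) LinearMap.id s, ?_⟩
    rw [← LinearMap.comp_apply, ← map_comp, ← LinearMap.comp_apply,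
      LinearMap.rTensor_comp_lTensor]
    rfl
  have ht₂ : (LinearMap.id - π).rTensor W t ∈ flagSum B C := by
    have hlt : finrank ℂ (S.map (LinearMap.id - π)) < n := hn ▸
      Submodule.finrank_map_lt _ huS (fun hu => hu' (hu ▸ F'.zero_mem))
        (by simp [π, Submodule.projection_apply_of_mem_left hK hu''])
    refine ih _ hlt _ rfl ⟨?_, LinearMap.rTensor_mem_range_rTensor_map _ htS⟩
    rw [LinearMap.rTensor_sub, LinearMap.rTensor_id, LinearMap.sub_apply, LinearMap.id_apply]
    exact (glStab B C).sub_mem ht (flagSum_le_glStab B hC ht₁)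
  simpa [LinearMap.rTensor_sub] using (flagSum B C).add_mem ht₁ ht₂

end

theorem glStab_eq_flagSum_general {V W : Type*} [AddCommGroup V] [Module ℂ V]
    [AddCommGroup W] [Module ℂ W]
    (B : V →ₗ[ℂ] W →ₗ[ℂ] ℂ)
    (𝔽 : GenFlag V) :
    glStab B 𝔽.carrier = flagSum B 𝔽.carrier := by
  refine le_antisymm (fun t ht => ?_) (flagSum_le_glStab B 𝔽.chain)
  obtain ⟨S, _, htS⟩ := exists_finite_submodule_left_of_setFinite {t} (Set.finite_singleton t)
  exact glStab_inf_range_rTensor_le_flagSum B 𝔽.chain 𝔽.covers S ⟨ht, htS rfl⟩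

/-- for a generalized flag `𝔽 = {F'_α ⊂ F''_α}` in `V`
(`V`, `V_*` countable-dimensional and in nondegenerate pairing), the
stabilizer of `𝔽` in `𝔤𝔩(V,V_*) = V ⊗ V_*` equals `Σ_α F''_α ⊗ (F'_α)^⊥`. -/
theorem glStab_eq_flagSum {V W : Type*} [AddCommGroup V] [Module ℂ V]
    [AddCommGroup W] [Module ℂ W]
    (hV : Module.rank ℂ V ≤ Cardinal.aleph0)
    (hW : Module.rank ℂ W ≤ Cardinal.aleph0)
    (B : V →ₗ[ℂ] W →ₗ[ℂ] ℂ)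
    (hB₁ : ∀ v : V, (∀ w : W, B v w = 0) → v = 0)
    (hB₂ : ∀ w : W, (∀ v : V, B v w = 0) → w = 0)
    (𝔽 : GenFlag V) :
    glStab B 𝔽.carrier = flagSum B 𝔽.carrier :=
  glStab_eq_flagSum_general B 𝔽
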